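/- arXiv:1803.01669 — 4 statements merged into one kernel-verified Lean document; each statement's English description precedes it below -/
import Mathlib

section
/- Let u_x, u_y, u_xx, u_xy, u_yy be real numbers and set J = u_y² u_xx − 2 u_x u_y u_xy + u_x² u_yy, assumed nonzero. Define β = (u_y u_xy − u_x u_yy)/J and α = (u_y u_xx − u_x u_xy)/J. Then β² u_xx − 2αβ u_xy + α² u_yy = (u_xx u_yy − u_xy²)/J, i.e., the invariantization of u_ww equals H/J where H = u_xx u_yy − u_xy². -/
/-!
Let `A` be the Hessian `!![u_xx, u_xy; u_xy, u_yy]` and `w = (u_y, -u_x)`. Then `J = w ⬝ᵥ A w`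
and `J • (α, β) = A w`, while the left-hand side is the quadratic form of `adj A` at `(α, β)`.
Since `adj A * A = det A • 1`, we get `A w ⬝ᵥ adj A (A w) = det A * (w ⬝ᵥ A w) = H * J`,
and dividing by `J ^ 2` gives `H / J`.
-/

open Matrix

theorem Matrix.mulVec_dotProduct_adjugate_mulVec {n R : Type*} [Fintype n] [DecidableEq n]
    [CommRing R] (A : Matrix n n R) (w : n → R) :
    A *ᵥ w ⬝ᵥ A.adjugate *ᵥ (A *ᵥ w) = A.det * (w ⬝ᵥ A *ᵥ w) := by
  rw [mulVec_mulVec, adjugate_mul, smul_mulVec, one_mulVec, dotProduct_smul, smul_eq_mul,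
    dotProduct_comm]

theorem adjugate_quadForm_mulVec_fin_two {R : Type*} [CommRing R] (a b c x y : R) :
    c * (a * x + b * y) ^ 2 - 2 * b * (a * x + b * y) * (b * x + c * y)
      + a * (b * x + c * y) ^ 2 = (a * c - b ^ 2) * (a * x ^ 2 + 2 * b * x * y + c * y ^ 2) := by
  have h := mulVec_dotProduct_adjugate_mulVec !![a, b; b, c] ![x, y]
  simp only [adjugate_fin_two_of, det_fin_two_of, mulVec, dotProduct, Fin.sum_univ_two, of_apply,
    cons_val', cons_val_zero, cons_val_fin_one, cons_val_one, neg_mul] at h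
  linear_combination h

/-- with `β = (u_y u_xy − u_x u_yy)/J` and `α = (u_y u_xx − u_x u_xy)/J`,
where `J = u_y² u_xx − 2 u_x u_y u_xy + u_x² u_yy ≠ 0`, the invariantization of
`u_ww` equals `H/J` with `H = u_xx u_yy − u_xy²`. -/
theorem invariantization_uww (ux uy uxx uxy uyy J H α β : ℝ)
    (hJ : J = uy ^ 2 * uxx - 2 * ux * uy * uxy + ux ^ 2 * uyy) (hJ0 : J ≠ 0)
    (hH : H = uxx * uyy - uxy ^ 2)
    (hβ : β = (uy * uxy - ux * uyy) / J)
    (hα : α = (uy * uxx - ux * uxy) / J) :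
    β ^ 2 * uxx - 2 * α * β * uxy + α ^ 2 * uyy = H / J := by
  have key := adjugate_quadForm_mulVec_fin_two uxx uxy uyy uy (-ux)
  subst hα hβ hH
  field_simp
  rw [hJ]
  linear_combination key
end

section
/- Let u: ℝ² → ℝ be twice continuously differentiable, let A be a 2×2 real matrix with det A = 1, let b ∈ ℝ², and let T(x) = A x + b. If v: ℝ² → ℝ is twice continuously differentiable and satisfies v(T(x)) = u(x) for all x, then the differential invariant J is equi-affine invariant: v_z² v_ww − 2 v_z v_w v_zw + v_w² v_zz evaluated at T(x) equals u_x² u_yy − 2 u_x u_y u_xy + u_y² u_xx evaluated at x, for every x ∈ ℝ². -/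
/-!
Write `w_f = (f_y, -f_x)` for the gradient of `f` turned by a right angle. Then
`J[f] = D²f (w_f, w_f)`. If `u = v ∘ T` with `T x = A x + b`, then `D²u(w, w) = D²v(A w, A w)`,
and `A w_u = det A • w_v` because `A R Aᵀ = det A • R` for the rotation `R` by a right angle.
Hence `J[u](x) = (det A)² J[v](T x)`.
-/

open Matrix

noncomputable def pdx (f : ℝ × ℝ → ℝ) (p : ℝ × ℝ) : ℝ := fderiv ℝ f p (1, 0)
noncomputable def pdy (f : ℝ × ℝ → ℝ) (p : ℝ × ℝ) : ℝ := fderiv ℝ f p (0, 1)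
noncomputable def pdxx (f : ℝ × ℝ → ℝ) : ℝ × ℝ → ℝ := pdx (pdx f)
noncomputable def pdxy (f : ℝ × ℝ → ℝ) : ℝ × ℝ → ℝ := pdy (pdx f)
noncomputable def pdyy (f : ℝ × ℝ → ℝ) : ℝ × ℝ → ℝ := pdy (pdy f)

/-- The second-order differential invariant `J[u] = u_x² u_yy − 2 u_x u_y u_xy + u_y² u_xx`. -/
noncomputable def Jinv (f : ℝ × ℝ → ℝ) (p : ℝ × ℝ) : ℝ :=
  (pdx f p) ^ 2 * pdyy f p - 2 * pdx f p * pdy f p * pdxy f p + (pdy f p) ^ 2 * pdxx f p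

section FDeriv

variable {𝕜 E F G : Type*} [NontriviallyNormedField 𝕜]
  [NormedAddCommGroup E] [NormedSpace 𝕜 E] [NormedAddCommGroup F] [NormedSpace 𝕜 F]
  [NormedAddCommGroup G] [NormedSpace 𝕜 G]

theorem fderiv_fderiv_apply {f : E → F} {x : E} (hf : DifferentiableAt 𝕜 (fderiv 𝕜 f) x)
    (v w : E) : fderiv 𝕜 (fun y ↦ fderiv 𝕜 f y w) x v = fderiv 𝕜 (fderiv 𝕜 f) x v w := by
  simp [fderiv_clm_apply hf (differentiableAt_const w)]

theorem fderiv_comp_affine {f : F → G} (L : E →L[𝕜] F) (c : F) {x : E}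
    (hf : DifferentiableAt 𝕜 f (L x + c)) :
    fderiv 𝕜 (fun y ↦ f (L y + c)) x = (fderiv 𝕜 f (L x + c)).comp L :=
  (hf.hasFDerivAt.comp x (L.hasFDerivAt.add_const c)).fderiv

theorem fderiv_fderiv_comp_affine_apply {f : F → G} (L : E →L[𝕜] F) (c : F) {x : E}
    (hf : Differentiable 𝕜 f) (hf' : DifferentiableAt 𝕜 (fderiv 𝕜 f) (L x + c)) (v w : E) :
    fderiv 𝕜 (fderiv 𝕜 fun y ↦ f (L y + c)) x v w =
      fderiv 𝕜 (fderiv 𝕜 f) (L x + c) (L v) (L w) := by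
  have hfT : fderiv 𝕜 (fun y ↦ f (L y + c)) = fun y ↦ (fderiv 𝕜 f (L y + c)).comp L :=
    funext fun y ↦ fderiv_comp_affine L c (hf _)
  have hf'T : DifferentiableAt 𝕜 (fun z ↦ fderiv 𝕜 f z (L w)) (L x + c) :=
    hf'.clm_apply (differentiableAt_const _)
  calc fderiv 𝕜 (fderiv 𝕜 fun y ↦ f (L y + c)) x v w
      = fderiv 𝕜 (fun y ↦ fderiv 𝕜 f (L y + c) (L w)) x v := by
        have hd : DifferentiableAt 𝕜 (fderiv 𝕜 fun y ↦ f (L y + c)) x := by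
          rw [hfT]
          exact (hf'.comp x (L.differentiableAt.add_const c)).clm_comp (differentiableAt_const L)
        rw [← fderiv_fderiv_apply hd, hfT]
        rfl
    _ = fderiv 𝕜 (fun z ↦ fderiv 𝕜 f z (L w)) (L x + c) (L v) := by
        rw [fderiv_comp_affine L c hf'T]
        rfl
    _ = fderiv 𝕜 (fderiv 𝕜 f) (L x + c) (L v) (L w) := fderiv_fderiv_apply hf' _ _

end FDeriv

theorem ContinuousLinearMap.apply_mk_eq_smul_add_smul {M : Type*} [AddCommGroup M] [Module ℝ M]
    [TopologicalSpace M] (φ : ℝ × ℝ →L[ℝ] M) (s t : ℝ) :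
    φ (s, t) = s • φ (1, 0) + t • φ (0, 1) := by
  rw [← map_smul, ← map_smul, ← map_add]
  simp

def perpVec (φ : ℝ × ℝ →L[ℝ] ℝ) : ℝ × ℝ := (φ (0, 1), -φ (1, 0))

theorem Jinv_eq_fderiv_fderiv_perpVec {f : ℝ × ℝ → ℝ} {p : ℝ × ℝ} (hf : ContDiffAt ℝ 2 f p) :
    Jinv f p = fderiv ℝ (fderiv ℝ f) p (perpVec (fderiv ℝ f p)) (perpVec (fderiv ℝ f p)) := by
  have hf' : DifferentiableAt ℝ (fderiv ℝ f) p :=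
    (hf.fderiv_right (m := 1) (by norm_num)).differentiableAt one_ne_zero
  set H := fderiv ℝ (fderiv ℝ f) p
  have hsymm : H (1, 0) (0, 1) = H (0, 1) (1, 0) := hf.isSymmSndFDerivAt (by simp) _ _
  have hxx : pdxx f p = H (1, 0) (1, 0) := fderiv_fderiv_apply hf' _ _
  have hxy : pdxy f p = H (0, 1) (1, 0) := fderiv_fderiv_apply hf' _ _
  have hyy : pdyy f p = H (0, 1) (0, 1) := fderiv_fderiv_apply hf' _ _
  rw [perpVec, H.apply_mk_eq_smul_add_smul, _root_.add_apply, _root_.smul_apply, _root_.smul_apply,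
    (H (1, 0)).apply_mk_eq_smul_add_smul, (H (0, 1)).apply_mk_eq_smul_add_smul,
    Jinv, hxx, hxy, hyy, hsymm]
  simp only [pdx, pdy, smul_eq_mul]
  ring

def Matrix.toProdCLM (A : Matrix (Fin 2) (Fin 2) ℝ) : ℝ × ℝ →L[ℝ] ℝ × ℝ :=
  (A 0 0 • ContinuousLinearMap.fst ℝ ℝ ℝ + A 0 1 • ContinuousLinearMap.snd ℝ ℝ ℝ).prod
    (A 1 0 • ContinuousLinearMap.fst ℝ ℝ ℝ + A 1 1 • ContinuousLinearMap.snd ℝ ℝ ℝ)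

@[simp]
theorem Matrix.toProdCLM_apply (A : Matrix (Fin 2) (Fin 2) ℝ) (p : ℝ × ℝ) :
    A.toProdCLM p = (A 0 0 * p.1 + A 0 1 * p.2, A 1 0 * p.1 + A 1 1 * p.2) := by
  simp [toProdCLM]

theorem Matrix.toProdCLM_perpVec_comp (A : Matrix (Fin 2) (Fin 2) ℝ) (φ : ℝ × ℝ →L[ℝ] ℝ) :
    A.toProdCLM (perpVec (φ.comp A.toProdCLM)) = A.det • perpVec φ := by
  have h₁ : A.toProdCLM (1, 0) = (A 0 0, A 1 0) := by simp
  have h₂ : A.toProdCLM (0, 1) = (A 0 1, A 1 1) := by simp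
  rw [perpVec, perpVec, ContinuousLinearMap.comp_apply, ContinuousLinearMap.comp_apply, h₁, h₂,
    φ.apply_mk_eq_smul_add_smul (A 0 0), φ.apply_mk_eq_smul_add_smul (A 0 1), toProdCLM_apply,
    det_fin_two]
  simp only [smul_eq_mul, Prod.smul_mk, Prod.mk.injEq]
  constructor <;> ring

theorem J_equiaffine_invariant_general (A : Matrix (Fin 2) (Fin 2) ℝ) (hA : A.det = 1)
    (b₁ b₂ : ℝ) (u v : ℝ × ℝ → ℝ) (hv : ContDiff ℝ 2 v)
    (T : ℝ × ℝ → ℝ × ℝ)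
    (hT : ∀ p : ℝ × ℝ, T p = (A 0 0 * p.1 + A 0 1 * p.2 + b₁, A 1 0 * p.1 + A 1 1 * p.2 + b₂))
    (huv : ∀ p : ℝ × ℝ, v (T p) = u p) :
    ∀ p : ℝ × ℝ, Jinv v (T p) = Jinv u p := by
  obtain rfl : T = fun p ↦ A.toProdCLM p + (b₁, b₂) := funext fun p ↦ by simp [hT]
  obtain rfl : u = fun p ↦ v (A.toProdCLM p + (b₁, b₂)) := funext fun p ↦ (huv p).symm
  have hv₁ : Differentiable ℝ v := hv.differentiable (by norm_num)
  have hv₂ : Differentiable ℝ (fderiv ℝ v) :=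
    (hv.fderiv_right (m := 1) le_rfl).differentiable one_ne_zero
  have hu : ContDiff ℝ 2 fun p ↦ v (A.toProdCLM p + (b₁, b₂)) :=
    hv.comp (A.toProdCLM.contDiff.add contDiff_const)
  intro p
  rw [Jinv_eq_fderiv_fderiv_perpVec hv.contDiffAt, Jinv_eq_fderiv_fderiv_perpVec hu.contDiffAt,
    fderiv_fderiv_comp_affine_apply _ _ hv₁ (hv₂ _), fderiv_comp_affine _ _ (hv₁ _),
    A.toProdCLM_perpVec_comp, hA, one_smul]

/-- `J` is an equi-affine differential invariant: if `v ∘ T = u` for an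
equi-affine map `T x = A x + b` with `det A = 1`, then `J[v](T x) = J[u](x)`. -/
theorem J_equiaffine_invariant (A : Matrix (Fin 2) (Fin 2) ℝ) (hA : A.det = 1)
    (b₁ b₂ : ℝ) (u v : ℝ × ℝ → ℝ) (hu : ContDiff ℝ 2 u) (hv : ContDiff ℝ 2 v)
    (T : ℝ × ℝ → ℝ × ℝ)
    (hT : ∀ p : ℝ × ℝ, T p = (A 0 0 * p.1 + A 0 1 * p.2 + b₁, A 1 0 * p.1 + A 1 1 * p.2 + b₂))
    (huv : ∀ p : ℝ × ℝ, v (T p) = u p) :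
    ∀ p : ℝ × ℝ, Jinv v (T p) = Jinv u p :=
  J_equiaffine_invariant_general A hA b₁ b₂ u v hv T hT huv
end

section
/- Let u: ℝ³ → ℝ be twice continuously differentiable, let A be an invertible 3×3 real matrix, b ∈ ℝ³, and T(x) = A x + b. If v: ℝ³ → ℝ is twice continuously differentiable with v(T(x)) = u(x) for all x, and the Hessian ∇²u(x) is invertible at a point x, then ∇v(T(x))ᵀ (∇²v(T(x)))⁻¹ ∇v(T(x)) = ∇u(x)ᵀ (∇²u(x))⁻¹ ∇u(x); that is, the quantity ∇uᵀ(∇²u)⁻¹∇u is an affine differential invariant of 3D images. -/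
open Matrix

/-- The gradient of `f : ℝ³ → ℝ` at `x`. -/
noncomputable def grad (f : (Fin 3 → ℝ) → ℝ) (x : Fin 3 → ℝ) : Fin 3 → ℝ :=
  fun i => fderiv ℝ f x (Pi.single i 1)

/-- The Hessian matrix of `f : ℝ³ → ℝ` at `x`. -/
noncomputable def hess (f : (Fin 3 → ℝ) → ℝ) (x : Fin 3 → ℝ) :
    Matrix (Fin 3) (Fin 3) ℝ :=
  fun i j => fderiv ℝ (fun y => fderiv ℝ f y (Pi.single j 1)) x (Pi.single i 1)

/-! Composing with `T x = A x + b` multiplies the gradient by `Aᵀ` and turns the Hessian into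
the congruent matrix `Aᵀ H A` (chain rule; the second derivative of an affine map vanishes).
The factors of `A` then cancel in `gᵀ H⁻¹ g`. When `H` is singular so is `Aᵀ H A`, both
inverses are the junk value `0`, and both sides vanish. -/

theorem dotProduct_inv_mulVec_transpose_mul_mul {n R : Type*} [Fintype n] [DecidableEq n]
    [CommRing R] {A : Matrix n n R} (hA : IsUnit A.det) (H : Matrix n n R) (g : n → R) :
    Aᵀ *ᵥ g ⬝ᵥ (Aᵀ * H * A)⁻¹ *ᵥ (Aᵀ *ᵥ g) = g ⬝ᵥ H⁻¹ *ᵥ g := by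
  have hAt : IsUnit Aᵀ.det := by rwa [det_transpose]
  rw [Matrix.mul_inv_rev, Matrix.mul_inv_rev, mulVec_mulVec, mul_assoc, mul_assoc,
    nonsing_inv_mul _ hAt, mul_one, mulVec_transpose, dotProduct_mulVec, vecMul_vecMul,
    ← mul_assoc, mul_nonsing_inv _ hA, one_mul, ← dotProduct_mulVec]

theorem fderiv_apply_eq_dotProduct_grad (f : (Fin 3 → ℝ) → ℝ) (x w : Fin 3 → ℝ) :
    fderiv ℝ f x w = w ⬝ᵥ grad f x := by
  conv_lhs => rw [pi_eq_sum_univ' w]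
  simp [dotProduct, grad]

theorem hess_eq_toMatrix₂'_fderiv_fderiv {f : (Fin 3 → ℝ) → ℝ} {x : Fin 3 → ℝ}
    (hf : DifferentiableAt ℝ (fderiv ℝ f) x) :
    hess f x = LinearMap.toMatrix₂' ℝ (fderiv ℝ (fderiv ℝ f) x).toLinearMap₁₂ := by
  ext i j
  simp [hess, fderiv_clm_apply hf (differentiableAt_const _)]

theorem hasFDerivAt_mulVec_add {m n : Type*} [Fintype m] [Fintype n] [DecidableEq n]
    (A : Matrix m n ℝ) (b : m → ℝ) (x : n → ℝ) :
    HasFDerivAt (fun y => A *ᵥ y + b) (toLin' A).toContinuousLinearMap x :=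
  (toLin' A).toContinuousLinearMap.hasFDerivAt.add_const b

theorem fderiv_comp_mulVec_add {m n F : Type*} [Fintype m] [Fintype n] [DecidableEq n]
    [NormedAddCommGroup F] [NormedSpace ℝ F] {v : (m → ℝ) → F} (A : Matrix m n ℝ) (b : m → ℝ)
    (hv : Differentiable ℝ v) :
    fderiv ℝ (fun y => v (A *ᵥ y + b)) =
      fun y => (fderiv ℝ v (A *ᵥ y + b)).comp (toLin' A).toContinuousLinearMap :=
  funext fun y => ((hv _).hasFDerivAt.comp y (hasFDerivAt_mulVec_add A b y)).fderiv

section AffineChangeOfVariables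

variable {v : (Fin 3 → ℝ) → ℝ} (A : Matrix (Fin 3) (Fin 3) ℝ) (b : Fin 3 → ℝ)

theorem grad_comp_mulVec_add (hv : Differentiable ℝ v) (x : Fin 3 → ℝ) :
    grad (fun y => v (A *ᵥ y + b)) x = Aᵀ *ᵥ grad v (A *ᵥ x + b) := by
  ext i
  simp only [grad, fderiv_comp_mulVec_add A b hv, ContinuousLinearMap.comp_apply,
    LinearMap.coe_toContinuousLinearMap', toLin'_apply, fderiv_apply_eq_dotProduct_grad,
    mulVec_single_one, mulVec]
  rfl

theorem hess_comp_mulVec_add (hv : ContDiff ℝ 2 v) (x : Fin 3 → ℝ) :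
    hess (fun y => v (A *ᵥ y + b)) x = Aᵀ * hess v (A *ᵥ x + b) * A := by
  set L := (toLin' A).toContinuousLinearMap
  set B := fderiv ℝ (fderiv ℝ v) (A *ᵥ x + b)
  have hD : Differentiable ℝ (fderiv ℝ v) := (hv.fderiv_right le_rfl).differentiable one_ne_zero
  have hsecond : HasFDerivAt (fderiv ℝ fun y => v (A *ᵥ y + b))
      ((ContinuousLinearMap.precomp ℝ L).comp (B.comp L)) x := by
    rw [fderiv_comp_mulVec_add A b (hv.differentiable two_ne_zero)]
    exact (ContinuousLinearMap.precomp ℝ L).hasFDerivAt.comp x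
      ((hD _).hasFDerivAt.comp x (hasFDerivAt_mulVec_add A b x))
  rw [hess_eq_toMatrix₂'_fderiv_fderiv hsecond.differentiableAt, hsecond.fderiv,
    hess_eq_toMatrix₂'_fderiv_fderiv (hD _)]
  have hpullback : ((ContinuousLinearMap.precomp ℝ L).comp (B.comp L)).toLinearMap₁₂ =
      B.toLinearMap₁₂.compl₁₂ (toLin' A) (toLin' A) := rfl
  rw [hpullback, LinearMap.toMatrix₂'_compl₁₂, LinearMap.toMatrix'_toLin']

end AffineChangeOfVariables

theorem gradient_hessian_quadratic_form_invariant_3d_general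
    (u v : (Fin 3 → ℝ) → ℝ) (hv : ContDiff ℝ 2 v)
    (A : Matrix (Fin 3) (Fin 3) ℝ) (hA : IsUnit A.det) (b : Fin 3 → ℝ)
    (T : (Fin 3 → ℝ) → (Fin 3 → ℝ)) (hT : ∀ x, T x = A.mulVec x + b)
    (huv : ∀ x, v (T x) = u x)
    (x : Fin 3 → ℝ) :
    grad v (T x) ⬝ᵥ (hess v (T x))⁻¹.mulVec (grad v (T x)) =
      grad u x ⬝ᵥ (hess u x)⁻¹.mulVec (grad u x) := by
  have hu : u = fun y => v (A *ᵥ y + b) := funext fun y => by rw [← huv, hT]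
  rw [hu, hT, grad_comp_mulVec_add A b (hv.differentiable two_ne_zero),
    hess_comp_mulVec_add A b hv, dotProduct_inv_mulVec_transpose_mul_mul hA]

/-- the quantity `∇uᵀ (∇²u)⁻¹ ∇u` is an affine differential invariant of
3D images: if `v ∘ T = u` for `T x = A x + b` with `A` invertible, and `∇²u(x)` is
invertible, then `∇v(Tx)ᵀ (∇²v(Tx))⁻¹ ∇v(Tx) = ∇u(x)ᵀ (∇²u(x))⁻¹ ∇u(x)`. -/
theorem gradient_hessian_quadratic_form_invariant_3d
    (u v : (Fin 3 → ℝ) → ℝ) (hu : ContDiff ℝ 2 u) (hv : ContDiff ℝ 2 v)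
    (A : Matrix (Fin 3) (Fin 3) ℝ) (hA : IsUnit A.det) (b : Fin 3 → ℝ)
    (T : (Fin 3 → ℝ) → (Fin 3 → ℝ)) (hT : ∀ x, T x = A.mulVec x + b)
    (huv : ∀ x, v (T x) = u x)
    (x : Fin 3 → ℝ) (hHess : IsUnit (hess u x).det) :
    grad v (T x) ⬝ᵥ (hess v (T x))⁻¹.mulVec (grad v (T x)) =
      grad u x ⬝ᵥ (hess u x)⁻¹.mulVec (grad u x) :=
  gradient_hessian_quadratic_form_invariant_3d_general u v hv A hA b T hT huv x
end

section
/- Let u: ℝ² → ℝ be twice continuously differentiable, let A be a 2×2 real matrix with det A = 1, let b ∈ ℝ², and let T(x) = A x + b. If v: ℝ² → ℝ is twice continuously differentiable and satisfies v(T(x)) = u(x) for all x, then the modified affine-invariant gradient magnitude satisfies √(H[v]²/(J[v]² + 1)) evaluated at T(x) equals √(H[u]²/(J[u]² + 1)) evaluated at x, where H[u] = u_xx u_yy − u_xy² and J[u] = u_x² u_yy − 2 u_x u_y u_xy + u_y² u_xx. -/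
open Matrix

/-- `H[u] = u_xx u_yy − u_xy²`. -/
noncomputable def Hinv (f : ℝ × ℝ → ℝ) (p : ℝ × ℝ) : ℝ :=
  pdxx f p * pdyy f p - (pdxy f p) ^ 2

/-- The modified affine-invariant gradient magnitude `√(H² / (J² + 1))`. -/
noncomputable def affGrad (f : ℝ × ℝ → ℝ) (p : ℝ × ℝ) : ℝ :=
  Real.sqrt (Hinv f p ^ 2 / (Jinv f p ^ 2 + 1))

/-!
For `u = v ∘ T` with `T x = A x + b`, the chain rule gives `∇u = Aᵀ ∇v` and, by the symmetry of
second derivatives of a `C²` function, `D²u = Aᵀ (D²v) A`. As `H = det D²` and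
`J = ∇ᵀ adj(D²) ∇` with `adj (Aᵀ M A) = adj A · adj M · adj Aᵀ`, both `H` and `J` get multiplied
by `(det A)²`, which is `1`.
-/

lemma Prod.fst_smul_add_snd_smul {R : Type*} [Semiring R] (w : R × R) :
    w.1 • (1, 0) + w.2 • (0, 1) = w := by
  ext <;> simp

lemma fderiv_apply_eq_pdx_pdy (f : ℝ × ℝ → ℝ) (p w : ℝ × ℝ) :
    fderiv ℝ f p w = w.1 * pdx f p + w.2 * pdy f p := by
  conv_lhs => rw [← w.fst_smul_add_snd_smul]
  simp only [map_add, map_smul, smul_eq_mul, pdx, pdy]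

lemma fderiv_fderiv_apply_eq_pdxx_pdxy_pdyy {f : ℝ × ℝ → ℝ} (hf : ContDiff ℝ 2 f)
    (p v w : ℝ × ℝ) :
    fderiv ℝ (fun x => fderiv ℝ f x w) p v =
      v.1 * w.1 * pdxx f p + (v.1 * w.2 + v.2 * w.1) * pdxy f p + v.2 * w.2 * pdyy f p := by
  have hd : DifferentiableAt ℝ (fderiv ℝ f) p :=
    (hf.fderiv_right (m := 1) le_rfl).differentiable one_ne_zero p
  have hsymm : fderiv ℝ (fderiv ℝ f) p (1, 0) (0, 1) = fderiv ℝ (fderiv ℝ f) p (0, 1) (1, 0) :=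
    hf.contDiffAt.isSymmSndFDerivAt (by simp) _ _
  have happly (v w : ℝ × ℝ) :
      fderiv ℝ (fun x => fderiv ℝ f x w) p v = fderiv ℝ (fderiv ℝ f) p v w := by
    rw [fderiv_clm_apply hd (differentiableAt_const w)]
    simp
  unfold pdxx pdxy pdyy pdx pdy
  simp only [happly]
  conv_lhs => rw [← v.fst_smul_add_snd_smul, ← w.fst_smul_add_snd_smul]
  simp only [map_add, map_smul, _root_.add_apply, _root_.smul_apply, smul_eq_mul, hsymm]
  ring

section AffineChange

variable {A : Matrix (Fin 2) (Fin 2) ℝ} {b₁ b₂ : ℝ} {T : ℝ × ℝ → ℝ × ℝ}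
  (hT : ∀ p : ℝ × ℝ, T p = (A 0 0 * p.1 + A 0 1 * p.2 + b₁, A 1 0 * p.1 + A 1 1 * p.2 + b₂))
include hT

lemma fderiv_comp_affine_apply {f : ℝ × ℝ → ℝ} {p : ℝ × ℝ} (hf : DifferentiableAt ℝ f (T p))
    (w : ℝ × ℝ) :
    fderiv ℝ (f ∘ T) p w =
      fderiv ℝ f (T p) (A 0 0 * w.1 + A 0 1 * w.2, A 1 0 * w.1 + A 1 1 * w.2) := by
  have hT' : HasFDerivAt T ((A 0 0 • ContinuousLinearMap.fst ℝ ℝ ℝ +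
      A 0 1 • ContinuousLinearMap.snd ℝ ℝ ℝ).prod
        (A 1 0 • ContinuousLinearMap.fst ℝ ℝ ℝ + A 1 1 • ContinuousLinearMap.snd ℝ ℝ ℝ)) p := by
    rw [show T = _ from funext hT]
    refine .prodMk ?_ ?_ <;>
      exact ((hasFDerivAt_fst.const_mul _).add (hasFDerivAt_snd.const_mul _)).add_const _
  rw [(hf.hasFDerivAt.comp p hT').fderiv]
  rfl

lemma pdx_comp_affine {f : ℝ × ℝ → ℝ} (hf : Differentiable ℝ f) :
    pdx (f ∘ T) = (fun x => fderiv ℝ f x (A 0 0, A 1 0)) ∘ T := by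
  ext q
  rw [pdx, fderiv_comp_affine_apply hT (hf _)]
  simp

lemma pdy_comp_affine {f : ℝ × ℝ → ℝ} (hf : Differentiable ℝ f) :
    pdy (f ∘ T) = (fun x => fderiv ℝ f x (A 0 1, A 1 1)) ∘ T := by
  ext q
  rw [pdy, fderiv_comp_affine_apply hT (hf _)]
  simp

lemma fderiv_fderiv_comp_affine_apply_s16 {f : ℝ × ℝ → ℝ} (hf : ContDiff ℝ 2 f) (p v w : ℝ × ℝ) :
    fderiv ℝ ((fun x => fderiv ℝ f x w) ∘ T) p v =
      fderiv ℝ (fun x => fderiv ℝ f x w) (T p)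
        (A 0 0 * v.1 + A 0 1 * v.2, A 1 0 * v.1 + A 1 1 * v.2) :=
  fderiv_comp_affine_apply hT
    (((hf.fderiv_right (m := 1) le_rfl).clm_apply contDiff_const).differentiable one_ne_zero _) v

variable {f : ℝ × ℝ → ℝ} (hf : ContDiff ℝ 2 f) (p : ℝ × ℝ)
include hf

lemma pdxx_comp_affine : pdxx (f ∘ T) p =
    A 0 0 ^ 2 * pdxx f (T p) + 2 * A 0 0 * A 1 0 * pdxy f (T p) + A 1 0 ^ 2 * pdyy f (T p) := by
  rw [pdxx, pdx_comp_affine hT (hf.differentiable two_ne_zero)]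
  refine (fderiv_fderiv_comp_affine_apply_s16 hT hf p (1, 0) _).trans ?_
  rw [fderiv_fderiv_apply_eq_pdxx_pdxy_pdyy hf]
  ring

lemma pdxy_comp_affine : pdxy (f ∘ T) p =
    A 0 0 * A 0 1 * pdxx f (T p) + (A 0 0 * A 1 1 + A 1 0 * A 0 1) * pdxy f (T p) +
      A 1 0 * A 1 1 * pdyy f (T p) := by
  rw [pdxy, pdx_comp_affine hT (hf.differentiable two_ne_zero)]
  refine (fderiv_fderiv_comp_affine_apply_s16 hT hf p (0, 1) _).trans ?_
  rw [fderiv_fderiv_apply_eq_pdxx_pdxy_pdyy hf]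
  ring

lemma pdyy_comp_affine : pdyy (f ∘ T) p =
    A 0 1 ^ 2 * pdxx f (T p) + 2 * A 0 1 * A 1 1 * pdxy f (T p) + A 1 1 ^ 2 * pdyy f (T p) := by
  rw [pdyy, pdy_comp_affine hT (hf.differentiable two_ne_zero)]
  refine (fderiv_fderiv_comp_affine_apply_s16 hT hf p (0, 1) _).trans ?_
  rw [fderiv_fderiv_apply_eq_pdxx_pdxy_pdyy hf]
  ring

lemma Hinv_comp_affine : Hinv (f ∘ T) p = A.det ^ 2 * Hinv f (T p) := by
  rw [Hinv, Hinv, pdxx_comp_affine hT hf, pdxy_comp_affine hT hf, pdyy_comp_affine hT hf,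
    det_fin_two]
  ring

lemma Jinv_comp_affine : Jinv (f ∘ T) p = A.det ^ 2 * Jinv f (T p) := by
  have hf1 : Differentiable ℝ f := hf.differentiable two_ne_zero
  rw [Jinv, Jinv, pdxx_comp_affine hT hf, pdxy_comp_affine hT hf, pdyy_comp_affine hT hf,
    pdx_comp_affine hT hf1, pdy_comp_affine hT hf1, Function.comp_apply, Function.comp_apply,
    fderiv_apply_eq_pdx_pdy, fderiv_apply_eq_pdx_pdy, det_fin_two]
  ring

end AffineChange

theorem affine_gradient_magnitude_invariant_general (A : Matrix (Fin 2) (Fin 2) ℝ) (hA : A.det = 1)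
    (b₁ b₂ : ℝ) (u v : ℝ × ℝ → ℝ) (hv : ContDiff ℝ 2 v)
    (T : ℝ × ℝ → ℝ × ℝ)
    (hT : ∀ p : ℝ × ℝ, T p = (A 0 0 * p.1 + A 0 1 * p.2 + b₁, A 1 0 * p.1 + A 1 1 * p.2 + b₂))
    (huv : ∀ p : ℝ × ℝ, v (T p) = u p) :
    ∀ p : ℝ × ℝ, affGrad v (T p) = affGrad u p := by
  intro p
  obtain rfl : v ∘ T = u := funext huv
  rw [affGrad, affGrad, Hinv_comp_affine hT hv, Jinv_comp_affine hT hv, hA, one_pow, one_mul,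
    one_mul]

/-- the modified affine-invariant gradient magnitude `√(H²/(J²+1))` is
equi-affine invariant: if `v ∘ T = u` for `T x = A x + b` with `det A = 1`, then it
takes the same value at `T x` for `v` as at `x` for `u`. -/
theorem affine_gradient_magnitude_invariant (A : Matrix (Fin 2) (Fin 2) ℝ) (hA : A.det = 1)
    (b₁ b₂ : ℝ) (u v : ℝ × ℝ → ℝ) (hu : ContDiff ℝ 2 u) (hv : ContDiff ℝ 2 v)
    (T : ℝ × ℝ → ℝ × ℝ)
    (hT : ∀ p : ℝ × ℝ, T p = (A 0 0 * p.1 + A 0 1 * p.2 + b₁, A 1 0 * p.1 + A 1 1 * p.2 + b₂))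
    (huv : ∀ p : ℝ × ℝ, v (T p) = u p) :
    ∀ p : ℝ × ℝ, affGrad v (T p) = affGrad u p :=
  affine_gradient_magnitude_invariant_general A hA b₁ b₂ u v hv T hT huv
end
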